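/- On the set H of pairs (a, r) ∈ Ĥ × ℝ modulo the equivalence (a, r) ~ (a', r) iff ν(a - a') ≥ r, define d(η_{a,r}, η_{a',r'}) = |r - r'| if ν(a - a') ≥ min(r, r'), and d = r + r' - 2ν(a - a') otherwise. Then d is a well-defined metric on H. -/

import Mathlib

universe u

/-- Evaluation of a finite continued fraction `[f₀, f₁, …, f_N]` in a field,
`cfEval [a] = a`, `cfEval (a :: l) = a + (cfEval l)⁻¹` (with the convention `0⁻¹ = 0`). -/
def cfEval {L : Type u} [Field L] : List L → L
  | [] => 0
  | a :: l => a + (cfEval l)⁻¹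

/-- The Moebius maps `ρ_n = σ_n ∘ ⋯ ∘ σ_0`, where `σ_i x = (x - f_i)⁻¹`. -/
def rho {L : Type u} [Field L] (f : ℕ → L) : ℕ → L → L
  | 0, x => (x - f 0)⁻¹
  | n + 1, x => (rho f n x - f (n + 1))⁻¹

/-- The derivative `ρ_n'` of `ρ_n`, computed by the chain rule from
`σ_i'(x) = -((x - f_i)⁻¹)²`. -/
def rho' {L : Type u} [Field L] (f : ℕ → L) : ℕ → L → L
  | 0, x => -((x - f 0)⁻¹) ^ 2
  | n + 1, x => -((rho f n x - f (n + 1))⁻¹) ^ 2 * rho' f n x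

/-- An abstract presentation of the completion `K̂` of the Puiseux field
`E⟨⟨t⁻¹⟩⟩` over a field `E`.  The field `K` carries an additive valuation
`ν` with values in `ℚ` on nonzero elements (normalized by `ν (t^r) = -r`,
where `mono r` plays the role of the monomial `t^r`), the subfield `E` is
embedded via `emb`, the simple "Laurent Puiseux polynomials" (the ring
generated by `E` and all rational powers of `t`) are dense, and `K` is
complete for `ν`. -/
structure PuiseuxCompletion (E : Type u) [Field E] where
  K : Type u
  [fieldK : Field K]
  ν : K → ℚ
  emb : E →+* K
  mono : ℚ → K
  mono_zero : mono 0 = 1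
  mono_mul : ∀ r s : ℚ, mono r * mono s = mono (r + s)
  ν_mono : ∀ r : ℚ, ν (mono r) = -r
  ν_emb : ∀ e : E, e ≠ 0 → ν (emb e) = 0
  ν_mul : ∀ x y : K, x ≠ 0 → y ≠ 0 → ν (x * y) = ν x + ν y
  ν_add : ∀ x y : K, x ≠ 0 → y ≠ 0 → x + y ≠ 0 → min (ν x) (ν y) ≤ ν (x + y)
  dense' : ∀ z : K, ∀ C : ℚ,
    ∃ f ∈ Subring.closure (Set.range emb ∪ Set.range mono), z = f ∨ C < ν (z - f)
  complete' : ∀ uSeq : ℕ → K,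
    (∀ C : ℚ, ∃ N : ℕ, ∀ m ≥ N, ∀ n ≥ N, uSeq m = uSeq n ∨ C < ν (uSeq m - uSeq n)) →
    ∃ z : K, ∀ C : ℚ, ∃ N : ℕ, ∀ n ≥ N, uSeq n = z ∨ C < ν (uSeq n - z)

attribute [instance] PuiseuxCompletion.fieldK

namespace PuiseuxCompletion

variable {E : Type u} [Field E] (P : PuiseuxCompletion E)

/-- The ring `Ā = E⟨t⟩` of Puiseux polynomials: finite `E`-linear combinations of
nonnegative rational powers of `t`. -/
def Abar : Subring P.K :=
  Subring.closure (Set.range P.emb ∪ P.mono '' {r : ℚ | 0 ≤ r})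

/-- `deg f = -ν f`. -/
def deg (f : P.K) : ℚ := -P.ν f

/-- The rational Puiseux field `k̃ = Quot(Ā) = ⋃ₙ E(t^{1/n})`, as a subfield of `K̂`. -/
def ktilde : Subfield P.K := Subfield.closure (P.Abar : Set P.K)

/-- `uSeq n → z` with respect to the valuation `ν`. -/
def TendsTo (uSeq : ℕ → P.K) (z : P.K) : Prop :=
  ∀ C : ℚ, ∃ N : ℕ, ∀ n ≥ N, uSeq n = z ∨ C < P.ν (uSeq n - z)

/-- One step of the continued fraction algorithm succeeds at index `i`:
`f i` is the Puiseux polynomial with `ν (z_i - f i) > 0`, the fraction does not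
end at `i` (`z_i ≠ f i`), and `z_{i+1} = (z_i - f i)⁻¹`. -/
def CFStep (f zs : ℕ → P.K) (i : ℕ) : Prop :=
  f i ∈ P.Abar ∧ 0 < P.ν (zs i - f i) ∧ zs i ≠ f i ∧ zs (i + 1) = (zs i - f i)⁻¹

/-- The `n`-th approximant `x_n = [f₀, …, f_n]_{ev}`. -/
def approx (f : ℕ → P.K) (n : ℕ) : P.K :=
  cfEval (List.ofFn fun i : Fin (n + 1) => f i)

/-- The continued fraction of `z` begins with the coefficients `f 0, …, f n`. -/
def CFBegins (f : ℕ → P.K) (n : ℕ) (z : P.K) : Prop :=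
  ∃ zs : ℕ → P.K, zs 0 = z ∧ (∀ i < n, P.CFStep f zs i) ∧
    f n ∈ P.Abar ∧ (zs n = f n ∨ 0 < P.ν (zs n - f n))

/-- `z` is the value of the continued fraction expression with coefficients `f`
and length `L` (finite or infinite); the coefficients are Puiseux polynomials of
positive degree after the zeroth one. -/
def CFExprEval (f : ℕ → P.K) (L : WithTop ℕ) (z : P.K) : Prop :=
  f 0 ∈ P.Abar ∧
  (∀ i : ℕ, 1 ≤ i → (i : WithTop ℕ) ≤ L → f i ∈ P.Abar ∧ 0 < P.deg (f i)) ∧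
  ((∃ N : ℕ, L = (N : WithTop ℕ) ∧ z = P.approx f N) ∨
    (L = ⊤ ∧ P.TendsTo (fun n => P.approx f n) z))

/-- The equivalence relation `(a, r) ~ (a', r')` iff `r = r'` and `ν (a - a') ≥ r`
(the pairs define the same Berkovich point `η_{a,r}` of type II or III). -/
def ballEquiv (p q : P.K × ℝ) : Prop :=
  p.2 = q.2 ∧ (p.1 = q.1 ∨ p.2 ≤ (P.ν (p.1 - q.1) : ℝ))

open scoped Classical in
/-- The Berkovich hyperbolic distance, computed on representatives. -/
noncomputable def berkDist (p q : P.K × ℝ) : ℝ :=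
  if p.1 = q.1 ∨ min p.2 q.2 ≤ (P.ν (p.1 - q.1) : ℝ) then |p.2 - q.2|
  else p.2 + q.2 - 2 * (P.ν (p.1 - q.1) : ℝ)

/-- The closed ball `B_a^{[r]} = {b : ν (b - a) ≥ r}` corresponding to `η_{a,r}`. -/
def closedBall (a : P.K) (r : ℝ) : Set P.K :=
  {b : P.K | b = a ∨ r ≤ (P.ν (b - a) : ℝ)}

/-- The Moebius transformation associated to a `2 × 2` matrix. -/
def mob (g : Matrix (Fin 2) (Fin 2) P.K) (x : P.K) : P.K :=
  (g 0 0 * x + g 0 1) / (g 1 0 * x + g 1 1)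

/-- The ring `A_M = E[t^{1/M}]`. -/
def AM (M : ℕ) : Subring P.K :=
  Subring.closure (Set.range P.emb ∪ {P.mono (1 / (M : ℚ))})

/-- The field `E(t^{1/M})`, whose `ν`-completion inside `K̂` is `K_M = E((t^{-1/M}))`. -/
def kM (M : ℕ) : Subfield P.K :=
  Subfield.closure (Set.range P.emb ∪ {P.mono (1 / (M : ℚ))})

end PuiseuxCompletion

/-!
Write `α(p, q) = min (r, s, ν (a - b))` for `p = (a, r)`, `q = (b, s)` (with `ν 0 = ∞`): the point
`η_{a, α}` is where the paths from `η_{a,r}` and `η_{b,s}` towards `∞` in the Berkovich tree meet,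
and `d(p, q) = (r - α) + (s - α)`. The ultrametric inequality for `ν` makes `α` satisfy
`min (α(p, q), α(q, w)) ≤ α(p, w)`, which gives both the triangle inequality and, since `p ~ p'`
means exactly `r = r' ≤ α(p, p')`, the invariance of `α`, hence of `d`, under `~`.
-/

namespace PuiseuxCompletion

variable {E : Type u} [Field E] (P : PuiseuxCompletion E)

lemma ν_one : P.ν 1 = 0 := by
  simpa [P.mono_zero] using P.ν_mono 0

lemma ν_neg {x : P.K} (hx : x ≠ 0) : P.ν (-x) = P.ν x := by
  have h_neg_one : P.ν (-1) = 0 := by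
    have := P.ν_mul (-1) (-1) (by norm_num) (by norm_num)
    rw [neg_mul_neg, one_mul, ν_one] at this
    linarith
  simpa [h_neg_one] using P.ν_mul (-1) x (by norm_num) hx

/-- `ν x ≥ c`, with the convention `ν 0 = ∞`. -/
def NuGe (x : P.K) (c : ℝ) : Prop := x = 0 ∨ c ≤ (P.ν x : ℝ)

variable {P}

lemma NuGe.mono {x : P.K} {c c' : ℝ} (h : P.NuGe x c) (hc : c' ≤ c) : P.NuGe x c' :=
  h.imp_right hc.trans

lemma NuGe.neg {x : P.K} {c : ℝ} (h : P.NuGe x c) : P.NuGe (-x) c := by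
  by_cases hx : x = 0
  · exact Or.inl (by simp [hx])
  · exact Or.inr (by rw [P.ν_neg hx]; exact h.resolve_left hx)

lemma NuGe.add {x y : P.K} {c : ℝ} (hx : P.NuGe x c) (hy : P.NuGe y c) : P.NuGe (x + y) c := by
  by_cases hx0 : x = 0
  · simpa [hx0] using hy
  by_cases hy0 : y = 0
  · simpa [hy0] using hx
  by_cases hxy : x + y = 0
  · exact Or.inl hxy
  have h_ultra : ((min (P.ν x) (P.ν y) : ℚ) : ℝ) ≤ P.ν (x + y) := by
    exact_mod_cast P.ν_add x y hx0 hy0 hxy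
  rw [Rat.cast_min] at h_ultra
  exact Or.inr ((le_min (hx.resolve_left hx0) (hy.resolve_left hy0)).trans h_ultra)

lemma NuGe.sub_comm {a b : P.K} {c : ℝ} (h : P.NuGe (a - b) c) : P.NuGe (b - a) c := by
  simpa using h.neg

lemma NuGe.sub_trans {a b w : P.K} {c : ℝ} (hab : P.NuGe (a - b) c) (hbw : P.NuGe (b - w) c) :
    P.NuGe (a - w) c := by
  simpa using hab.add hbw

variable (P)

open scoped Classical in
noncomputable def joinRadius (p q : P.K × ℝ) : ℝ :=
  if p.1 = q.1 then min p.2 q.2 else min (min p.2 q.2) (P.ν (p.1 - q.1))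

variable {P}

lemma le_joinRadius_iff {p q : P.K × ℝ} {c : ℝ} :
    c ≤ P.joinRadius p q ↔ c ≤ p.2 ∧ c ≤ q.2 ∧ P.NuGe (p.1 - q.1) c := by
  unfold joinRadius NuGe
  split_ifs with h <;> simp [h, sub_eq_zero, and_assoc]

lemma joinRadius_le_left (p q : P.K × ℝ) : P.joinRadius p q ≤ p.2 :=
  (le_joinRadius_iff.mp le_rfl).1

lemma joinRadius_le_right (p q : P.K × ℝ) : P.joinRadius p q ≤ q.2 :=
  (le_joinRadius_iff.mp le_rfl).2.1

lemma nuGe_joinRadius (p q : P.K × ℝ) : P.NuGe (p.1 - q.1) (P.joinRadius p q) :=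
  (le_joinRadius_iff.mp le_rfl).2.2

lemma joinRadius_comm (p q : P.K × ℝ) : P.joinRadius p q = P.joinRadius q p := by
  have h_le : ∀ p q : P.K × ℝ, P.joinRadius p q ≤ P.joinRadius q p := fun p q =>
    le_joinRadius_iff.mpr
      ⟨joinRadius_le_right p q, joinRadius_le_left p q, (nuGe_joinRadius p q).sub_comm⟩
  exact (h_le p q).antisymm (h_le q p)

lemma min_joinRadius_le (p q w : P.K × ℝ) :
    min (P.joinRadius p q) (P.joinRadius q w) ≤ P.joinRadius p w :=
  le_joinRadius_iff.mpr
    ⟨(min_le_left _ _).trans (joinRadius_le_left p q),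
      (min_le_right _ _).trans (joinRadius_le_right q w),
      ((nuGe_joinRadius p q).mono (min_le_left _ _)).sub_trans
        ((nuGe_joinRadius q w).mono (min_le_right _ _))⟩

lemma ballEquiv_iff_le_joinRadius {p q : P.K × ℝ} :
    P.ballEquiv p q ↔ p.2 = q.2 ∧ p.2 ≤ P.joinRadius p q := by
  rw [le_joinRadius_iff, ballEquiv, ← sub_eq_zero (a := p.1)]
  constructor
  · rintro ⟨h_eq, h_nu⟩
    exact ⟨h_eq, le_rfl, h_eq.le, h_nu⟩
  · rintro ⟨h_eq, -, -, h_nu⟩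
    exact ⟨h_eq, h_nu⟩

lemma equivalence_ballEquiv : Equivalence P.ballEquiv where
  refl p := ballEquiv_iff_le_joinRadius.mpr
    ⟨rfl, le_joinRadius_iff.mpr ⟨le_rfl, le_rfl, Or.inl (sub_self _)⟩⟩
  symm {p q} h := by
    rw [ballEquiv_iff_le_joinRadius] at h ⊢
    exact ⟨h.1.symm, h.1 ▸ joinRadius_comm p q ▸ h.2⟩
  trans {p q w} hpq hqw := by
    rw [ballEquiv_iff_le_joinRadius] at hpq hqw ⊢
    exact ⟨hpq.1.trans hqw.1, le_trans (le_min hpq.2 (hpq.1 ▸ hqw.2)) (min_joinRadius_le p q w)⟩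

lemma joinRadius_le_of_ballEquiv {p p' q q' : P.K × ℝ} (hp : P.ballEquiv p p')
    (hq : P.ballEquiv q q') : P.joinRadius p q ≤ P.joinRadius p' q' := by
  obtain ⟨-, hpp'⟩ := ballEquiv_iff_le_joinRadius.mp hp
  obtain ⟨-, hqq'⟩ := ballEquiv_iff_le_joinRadius.mp hq
  calc P.joinRadius p q
      ≤ min (P.joinRadius p' p) (min (P.joinRadius p q) (P.joinRadius q q')) := by
        rw [joinRadius_comm p' p]
        exact le_min ((joinRadius_le_left p q).trans hpp')
          (le_min le_rfl ((joinRadius_le_right p q).trans hqq'))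
    _ ≤ min (P.joinRadius p' p) (P.joinRadius p q') := by
        gcongr
        exact min_joinRadius_le p q q'
    _ ≤ P.joinRadius p' q' := min_joinRadius_le p' p q'

lemma joinRadius_congr {p p' q q' : P.K × ℝ} (hp : P.ballEquiv p p') (hq : P.ballEquiv q q') :
    P.joinRadius p q = P.joinRadius p' q' :=
  (joinRadius_le_of_ballEquiv hp hq).antisymm
    (joinRadius_le_of_ballEquiv (equivalence_ballEquiv.symm hp) (equivalence_ballEquiv.symm hq))

lemma berkDist_eq (p q : P.K × ℝ) : P.berkDist p q = p.2 + q.2 - 2 * P.joinRadius p q := by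
  have h_abs : |p.2 - q.2| = p.2 + q.2 - 2 * min p.2 q.2 := by
    rw [← max_sub_min_eq_abs']
    linarith [min_add_max p.2 q.2]
  unfold berkDist joinRadius
  by_cases h : p.1 = q.1
  · simp [h, h_abs]
  by_cases h_min : min p.2 q.2 ≤ (P.ν (p.1 - q.1) : ℝ)
  · simp [h, h_min, h_abs]
  · simp only [h, h_min, false_or, if_false, min_eq_right (le_of_not_ge h_min)]

lemma berkDist_nonneg (p q : P.K × ℝ) : 0 ≤ P.berkDist p q := by
  rw [berkDist_eq]
  linarith [joinRadius_le_left p q, joinRadius_le_right p q]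

lemma berkDist_eq_zero_iff {p q : P.K × ℝ} : P.berkDist p q = 0 ↔ P.ballEquiv p q := by
  rw [berkDist_eq, ballEquiv_iff_le_joinRadius]
  have := joinRadius_le_left p q
  have := joinRadius_le_right p q
  constructor
  · intro h
    constructor <;> linarith
  · rintro ⟨h_eq, h_le⟩
    linarith

lemma berkDist_comm (p q : P.K × ℝ) : P.berkDist p q = P.berkDist q p := by
  rw [berkDist_eq, berkDist_eq, joinRadius_comm]
  ring

lemma berkDist_triangle (p q w : P.K × ℝ) :
    P.berkDist p w ≤ P.berkDist p q + P.berkDist q w := by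
  rw [berkDist_eq, berkDist_eq, berkDist_eq]
  have h_min := min_joinRadius_le p q w
  have := joinRadius_le_right p q
  have := joinRadius_le_left q w
  rcases min_cases (P.joinRadius p q) (P.joinRadius q w) with ⟨h, -⟩ | ⟨h, -⟩ <;> linarith

lemma berkDist_congr {p p' q q' : P.K × ℝ} (hp : P.ballEquiv p p') (hq : P.ballEquiv q q') :
    P.berkDist p q = P.berkDist p' q' := by
  rw [berkDist_eq, berkDist_eq, joinRadius_congr hp hq, hp.1, hq.1]

end PuiseuxCompletion

open PuiseuxCompletion in
/-- the relation `(a,r) ~ (a',r')` iff `r = r'` and `ν(a-a') ≥ r`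
is an equivalence relation on `K̂ × ℝ`, and `d` descends to a well-defined
metric on the quotient `H` (the space of type II and III Berkovich points). -/
theorem statement15 {E : Type u} [Field E] (P : PuiseuxCompletion E) :
    Equivalence P.ballEquiv ∧
    (∀ p p' q q' : P.K × ℝ, P.ballEquiv p p' → P.ballEquiv q q' →
      P.berkDist p q = P.berkDist p' q') ∧
    (∀ p q : P.K × ℝ, 0 ≤ P.berkDist p q) ∧
    (∀ p q : P.K × ℝ, P.berkDist p q = 0 ↔ P.ballEquiv p q) ∧
    (∀ p q : P.K × ℝ, P.berkDist p q = P.berkDist q p) ∧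
    (∀ p q r : P.K × ℝ, P.berkDist p r ≤ P.berkDist p q + P.berkDist q r) :=
  ⟨equivalence_ballEquiv, fun _ _ _ _ => berkDist_congr, berkDist_nonneg,
    fun _ _ => berkDist_eq_zero_iff, berkDist_comm, berkDist_triangle⟩
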